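/- Suppose 𝒦(Σ) + 𝒴 = ℝ^s. Then conv[X(F) ∪ 𝒯*(Σ)] = ℝ^n. -/

import Mathlib

open Pointwise

/-- `ℓ`-fold iterate of a set-valued map: `SIter F ℓ x = F^ℓ(x)`. -/
def SIter {E : Type*} (F : E → Set E) : ℕ → E → Set E
  | 0, x => {x}
  | n + 1, x => ⋃ y ∈ SIter F n x, F y

/-- `X(F)`: initial states of infinite solutions of `x_{k+1} ∈ F(x_k)`. -/
def XSet {E : Type*} (F : E → Set E) : Set E :=
  {x | ∃ f : ℕ → E, f 0 = x ∧ ∀ k, f (k + 1) ∈ F (f k)}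

/-- `R(F) = ⋃_{ℓ ≥ 1} F^ℓ(0)`. -/
def RSet {E : Type*} [Zero E] (F : E → Set E) : Set E :=
  ⋃ ℓ ∈ {ℓ : ℕ | 1 ≤ ℓ}, SIter F ℓ 0

/-- The set-valued map `F(x) = Ax + B D^{-1}(𝒴 − Cx)` of the constrained system `(Σ,𝒴)`. -/
def Fmap {n m s : ℕ} (A : Matrix (Fin n) (Fin n) ℝ) (B : Matrix (Fin n) (Fin m) ℝ)
    (C : Matrix (Fin s) (Fin n) ℝ) (D : Matrix (Fin s) (Fin m) ℝ)
    (Y : Set (Fin s → ℝ)) : (Fin n → ℝ) → Set (Fin n → ℝ) :=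
  fun x => {z | ∃ u : Fin m → ℝ, C.mulVec x + D.mulVec u ∈ Y ∧ z = A.mulVec x + B.mulVec u}

/-- The strongly reachable subspace `𝒯*(Σ)`: states reachable from `0` with the output
kept identically zero along the way. -/
def Tstar {n m s : ℕ} (A : Matrix (Fin n) (Fin n) ℝ) (B : Matrix (Fin n) (Fin m) ℝ)
    (C : Matrix (Fin s) (Fin n) ℝ) (D : Matrix (Fin s) (Fin m) ℝ) : Set (Fin n → ℝ) :=
  RSet (Fmap A B C D ({0} : Set (Fin s → ℝ)))

/-- The weakly unobservable subspace `𝒱*(Σ)`: initial states for which an input exists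
making the output identically zero. -/
def Vstar {n m s : ℕ} (A : Matrix (Fin n) (Fin n) ℝ) (B : Matrix (Fin n) (Fin m) ℝ)
    (C : Matrix (Fin s) (Fin n) ℝ) (D : Matrix (Fin s) (Fin m) ℝ) : Set (Fin n → ℝ) :=
  XSet (Fmap A B C D ({0} : Set (Fin s → ℝ)))

/-- `𝒦(Σ) = im D + C 𝒯*(Σ)`. -/
def Kset {n m s : ℕ} (A : Matrix (Fin n) (Fin n) ℝ) (B : Matrix (Fin n) (Fin m) ℝ)
    (C : Matrix (Fin s) (Fin n) ℝ) (D : Matrix (Fin s) (Fin m) ℝ) : Set (Fin s → ℝ) :=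
  {y | ∃ (u : Fin m → ℝ) (t : Fin n → ℝ), t ∈ Tstar A B C D ∧ y = D.mulVec u + C.mulVec t}

/-- The image `im [C D]`. -/
def CDrange {n m s : ℕ} (C : Matrix (Fin s) (Fin n) ℝ) (D : Matrix (Fin s) (Fin m) ℝ) :
    Set (Fin s → ℝ) :=
  Set.range (fun p : (Fin n → ℝ) × (Fin m → ℝ) => C.mulVec p.1 + D.mulVec p.2)

section Aux

variable {n m s : ℕ} (A : Matrix (Fin n) (Fin n) ℝ) (B : Matrix (Fin n) (Fin m) ℝ)
    (C : Matrix (Fin s) (Fin n) ℝ) (D : Matrix (Fin s) (Fin m) ℝ)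

lemma mem_SIter_succ {E : Type*} (F : E → Set E) (ℓ : ℕ) (x z : E) :
    z ∈ SIter F (ℓ + 1) x ↔ ∃ y, y ∈ SIter F ℓ x ∧ z ∈ F y := by
  simp [SIter]

/-- trajectory extraction -/
lemma traj_of_mem_SIter {E : Type*} (F : E → Set E) :
    ∀ (ℓ : ℕ) (x t : E), t ∈ SIter F ℓ x →
      ∃ f : ℕ → E, f 0 = x ∧ f ℓ = t ∧ ∀ k < ℓ, f (k + 1) ∈ F (f k) := by
  intro ℓ
  induction ℓ with
  | zero =>
    intro x t ht
    refine ⟨fun _ => x, rfl, ?_, by omega⟩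
    simpa [SIter] using ht.symm
  | succ ℓ ih =>
    intro x t ht
    rw [mem_SIter_succ] at ht
    obtain ⟨y, hy, hty⟩ := ht
    obtain ⟨f, hf0, hfℓ, hstep⟩ := ih x y hy
    refine ⟨fun k => if k = ℓ + 1 then t else f k, by simp [hf0], by simp, ?_⟩
    intro k hk
    rcases Nat.lt_succ_iff_lt_or_eq.mp hk with h | h
    · have h1 : k + 1 ≠ ℓ + 1 := by omega
      have h2 : k ≠ ℓ + 1 := by omega
      simp only [if_neg h1, if_neg h2]
      exact hstep k h
    · subst h
      simpa [hfℓ, (by omega : k ≠ k + 1)] using hty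

abbrev Tℓ (ℓ : ℕ) : Set (Fin n → ℝ) := SIter (Fmap A B C D ({0} : Set (Fin s → ℝ))) ℓ 0

lemma Tℓ_combo : ∀ ℓ : ℕ, (0 ∈ Tℓ A B C D ℓ) ∧
    ∀ a b, a ∈ Tℓ A B C D ℓ → b ∈ Tℓ A B C D ℓ → ∀ c d : ℝ,
      c • a + d • b ∈ Tℓ A B C D ℓ := by
  intro ℓ
  induction ℓ with
  | zero =>
    refine ⟨rfl, ?_⟩
    intro a b ha hb c d
    simp only [Tℓ, SIter, Set.mem_singleton_iff] at ha hb ⊢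
    simp [ha, hb]
  | succ ℓ ih =>
    obtain ⟨ih0, ihc⟩ := ih
    constructor
    · rw [mem_SIter_succ]
      exact ⟨0, ih0, ⟨0, by simp, by simp⟩⟩
    · intro a b ha hb c d
      rw [mem_SIter_succ] at ha hb ⊢
      obtain ⟨ya, hya, ua, hua0, huaz⟩ := ha
      obtain ⟨yb, hyb, ub, hub0, hubz⟩ := hb
      refine ⟨c • ya + d • yb, ihc _ _ hya hyb c d, c • ua + d • ub, ?_, ?_⟩
      · simp only [Set.mem_singleton_iff] at hua0 hub0 ⊢
        rw [Matrix.mulVec_add, Matrix.mulVec_add, Matrix.mulVec_smul,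
          Matrix.mulVec_smul, Matrix.mulVec_smul, Matrix.mulVec_smul]
        calc c • C.mulVec ya + d • C.mulVec yb + (c • D.mulVec ua + d • D.mulVec ub)
            = c • (C.mulVec ya + D.mulVec ua) + d • (C.mulVec yb + D.mulVec ub) := by module
          _ = 0 := by rw [hua0, hub0]; simp
      · rw [huaz, hubz, Matrix.mulVec_add, Matrix.mulVec_add, Matrix.mulVec_smul,
          Matrix.mulVec_smul, Matrix.mulVec_smul, Matrix.mulVec_smul]
        module

lemma Tℓ_mono : ∀ ℓ : ℕ, Tℓ A B C D ℓ ⊆ Tℓ A B C D (ℓ + 1) := by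
  intro ℓ
  induction ℓ with
  | zero =>
    intro t ht
    simp only [Tℓ, SIter, Set.mem_singleton_iff] at ht
    subst ht
    exact (Tℓ_combo A B C D 1).1
  | succ ℓ ih =>
    intro t ht
    rw [mem_SIter_succ] at ht ⊢
    obtain ⟨y, hy, hty⟩ := ht
    exact ⟨y, ih hy, hty⟩

lemma Tℓ_mono' : ∀ {ℓ ℓ' : ℕ}, ℓ ≤ ℓ' → Tℓ A B C D ℓ ⊆ Tℓ A B C D ℓ' := by
  intro ℓ ℓ' h
  induction h with
  | refl => exact le_refl _
  | step h ih => exact fun x hx => Tℓ_mono A B C D _ (ih hx)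

noncomputable def Tmod (ℓ : ℕ) : Submodule ℝ (Fin n → ℝ) where
  carrier := Tℓ A B C D ℓ
  zero_mem' := (Tℓ_combo A B C D ℓ).1
  add_mem' := by
    intro a b ha hb
    have := (Tℓ_combo A B C D ℓ).2 a b ha hb 1 1
    simpa using this
  smul_mem' := by
    intro c a ha
    have := (Tℓ_combo A B C D ℓ).2 a a ha ha c 0
    simpa using this

/-- There is Q ≥ 1 with 𝒯* = 𝒯_Q. -/
lemma Tstar_stab : ∃ Q : ℕ, 1 ≤ Q ∧ Tstar A B C D = Tℓ A B C D Q := by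
  have hmono : Monotone (Tmod A B C D) := by
    intro a b hab
    exact Tℓ_mono' A B C D hab
  obtain ⟨q, hq⟩ := monotone_stabilizes_iff_noetherian.mpr inferInstance ⟨Tmod A B C D, hmono⟩
  refine ⟨max q 1, le_max_right _ _, ?_⟩
  ext t
  constructor
  · intro ht
    simp only [Tstar, RSet, Set.mem_iUnion] at ht
    obtain ⟨ℓ, hℓ1, hℓ⟩ := ht
    rcases le_or_gt ℓ (max q 1) with h | h
    · exact Tℓ_mono' A B C D h hℓ
    · have h1 : Tmod A B C D (max q 1) = Tmod A B C D ℓ := by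
        rcases le_or_gt q (max q 1) with _ | _
        · exact (hq (max q 1) (le_max_left _ _)).symm.trans (hq ℓ (le_of_lt (lt_of_le_of_lt (le_max_left _ _) h)))
        · omega
      have : t ∈ Tmod A B C D ℓ := hℓ
      rw [← h1] at this
      exact this
  · intro ht
    simp only [Tstar, RSet, Set.mem_iUnion]
    exact ⟨max q 1, (le_max_right q 1 : 1 ≤ max q 1), ht⟩

end Aux

section Main

variable {n m s : ℕ} (A : Matrix (Fin n) (Fin n) ℝ) (B : Matrix (Fin n) (Fin m) ℝ)
    (C : Matrix (Fin s) (Fin n) ℝ) (D : Matrix (Fin s) (Fin m) ℝ) (Y : Set (Fin s → ℝ))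

lemma Tstar_zero : (0 : Fin n → ℝ) ∈ Tstar A B C D := by
  obtain ⟨Q, hQ1, hQ⟩ := Tstar_stab A B C D
  rw [hQ]; exact (Tℓ_combo A B C D Q).1

lemma Tstar_add {a b : Fin n → ℝ} (ha : a ∈ Tstar A B C D) (hb : b ∈ Tstar A B C D) :
    a + b ∈ Tstar A B C D := by
  obtain ⟨Q, hQ1, hQ⟩ := Tstar_stab A B C D
  rw [hQ] at ha hb ⊢
  simpa using (Tℓ_combo A B C D Q).2 a b ha hb 1 1

lemma Tstar_neg {a : Fin n → ℝ} (ha : a ∈ Tstar A B C D) : -a ∈ Tstar A B C D := by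
  obtain ⟨Q, hQ1, hQ⟩ := Tstar_stab A B C D
  rw [hQ] at ha ⊢
  simpa using (Tℓ_combo A B C D Q).2 a a ha ha (-1) 0

lemma Tstar_pullback {t : Fin n → ℝ} (ht : t ∈ Tstar A B C D) :
    ∃ t' ∈ Tstar A B C D, ∃ w, C.mulVec t' + D.mulVec w = 0 ∧
      t = A.mulVec t' + B.mulVec w := by
  simp only [Tstar, RSet, Set.mem_iUnion, Set.mem_setOf_eq] at ht
  obtain ⟨ℓ, hℓ1, hℓ⟩ := ht
  obtain ⟨ℓ', rfl⟩ : ∃ ℓ', ℓ = ℓ' + 1 := ⟨ℓ - 1, by omega⟩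
  rw [mem_SIter_succ] at hℓ
  obtain ⟨y, hy, u, hu0, huz⟩ := hℓ
  refine ⟨y, ?_, u, by simpa using hu0, huz⟩
  simp only [Tstar, RSet, Set.mem_iUnion, Set.mem_setOf_eq]
  exact ⟨ℓ' + 1, by omega, Tℓ_mono A B C D ℓ' hy⟩

variable (hK : Kset A B C D + Y = Set.univ)
include hK

lemma onestep (v : Fin n → ℝ) :
    ∃ t ∈ Tstar A B C D, ∃ u, C.mulVec (v + t) + D.mulVec u ∈ Y := by
  have hv : C.mulVec v ∈ Kset A B C D + Y := by rw [hK]; trivial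
  rw [Set.mem_add] at hv
  obtain ⟨k, hk, y, hy, hky⟩ := hv
  obtain ⟨u', t', ht', hk'⟩ := hk
  refine ⟨-t', Tstar_neg A B C D ht', -u', ?_⟩
  have : C.mulVec (v + -t') + D.mulVec (-u')
      = C.mulVec v - (D.mulVec u' + C.mulVec t') := by
    rw [Matrix.mulVec_add, Matrix.mulVec_neg, Matrix.mulVec_neg]; module
  rw [this, ← hk', show C.mulVec v - k = y by rw [← hky]; abel]
  exact hy

lemma finite_horizon : ∀ (N : ℕ) (z : Fin n → ℝ), ∃ t ∈ Tstar A B C D,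
    ∃ (f : ℕ → (Fin n → ℝ)) (u : ℕ → (Fin m → ℝ)), f 0 = z + t ∧
      ∀ k < N, (C.mulVec (f k) + D.mulVec (u k) ∈ Y ∧
        f (k + 1) = A.mulVec (f k) + B.mulVec (u k)) := by
  intro N
  induction N with
  | zero =>
    intro z
    exact ⟨0, Tstar_zero A B C D, fun _ => z + 0, fun _ => 0, rfl, by omega⟩
  | succ N ih =>
    intro z
    obtain ⟨t0, ht0, u0, hu0⟩ := onestep A B C D Y hK z
    obtain ⟨t1, ht1, f1, u1, hf10, hfeas⟩ := ih (A.mulVec (z + t0) + B.mulVec u0)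
    obtain ⟨t', ht', w, hw0, hw1⟩ := Tstar_pullback A B C D ht1
    refine ⟨t0 + t', Tstar_add A B C D ht0 ht',
      (fun k => match k with | 0 => z + (t0 + t') | (k' + 1) => f1 k'),
      (fun k => match k with | 0 => u0 + w | (k' + 1) => u1 k'), rfl, ?_⟩
    intro k hk
    match k with
    | 0 =>
      constructor
      · show C.mulVec (z + (t0 + t')) + D.mulVec (u0 + w) ∈ Y
        have heq : C.mulVec (z + (t0 + t')) + D.mulVec (u0 + w)
            = (C.mulVec (z + t0) + D.mulVec u0) + (C.mulVec t' + D.mulVec w) := by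
          rw [Matrix.mulVec_add C z (t0 + t'), Matrix.mulVec_add C t0 t',
            Matrix.mulVec_add D u0 w, Matrix.mulVec_add C z t0]
          abel
        rw [heq, hw0, add_zero]
        exact hu0
      · show f1 0 = _
        rw [hf10, hw1, Matrix.mulVec_add A z (t0 + t'), Matrix.mulVec_add A t0 t',
          Matrix.mulVec_add B u0 w, Matrix.mulVec_add A z t0]
        abel
    | (k' + 1) =>
      obtain ⟨c1, c2⟩ := hfeas k' (by omega)
      exact ⟨c1, c2⟩


lemma mulVec_finsum {p q : ℕ} (M : Matrix (Fin p) (Fin q) ℝ) (sfin : Finset ℕ)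
    (g : ℕ → (Fin q → ℝ)) :
    M.mulVec (∑ i ∈ sfin, g i) = ∑ i ∈ sfin, M.mulVec (g i) := by
  simpa only [Matrix.mulVecLin_apply] using map_sum (Matrix.mulVecLin M) g sfin

lemma main_exists (z : Fin n → ℝ) :
    ∃ t ∈ Tstar A B C D, z + t ∈ XSet (Fmap A B C D Y) := by
  obtain ⟨Q, hQ1, hQ⟩ := Tstar_stab A B C D
  choose tc htc uc huc using onestep A B C D Y hK
  obtain ⟨t0, ht0, g0, u0, hg00, hfeas0⟩ := finite_horizon A B C D Y hK Q z
  let H : ℕ → (Fin n → ℝ) :=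
    fun j => Nat.rec (g0 Q) (fun _ h => A.mulVec (h + tc h) + B.mulVec (uc h)) j
  let G : ℕ → (Fin n → ℝ) := fun k => if k < Q then g0 k else H (k - Q)
  let Tk : ℕ → (Fin n → ℝ) := fun k => if k < Q then 0 else tc (G k)
  let Us : ℕ → (Fin m → ℝ) := fun k => if k < Q then u0 k else uc (G k)
  have hHsucc : ∀ j, H (j + 1) = A.mulVec (H j + tc (H j)) + B.mulVec (uc (H j)) :=
    fun j => rfl
  have hS1 : ∀ k, C.mulVec (G k + Tk k) + D.mulVec (Us k) ∈ Y := by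
    intro k
    by_cases h : k < Q
    · simp only [G, Tk, Us, if_pos h, add_zero]
      exact (hfeas0 k h).1
    · simp only [G, Tk, Us, if_neg h]
      exact huc _
  have hS2 : ∀ k, G (k + 1) = A.mulVec (G k + Tk k) + B.mulVec (Us k) := by
    intro k
    by_cases h : k + 1 < Q
    · have hk : k < Q := by omega
      simp only [G, Tk, Us, if_pos h, if_pos hk, add_zero]
      exact (hfeas0 k hk).2
    · by_cases h2 : k < Q
      · have hkQ : Q = k + 1 := by omega
        simp only [G, Tk, Us, if_neg h, if_pos h2, add_zero]
        have e0 : k + 1 - Q = 0 := by omega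
        rw [e0]
        show g0 Q = _
        rw [hkQ]
        exact (hfeas0 k h2).2
      · have hq : Q ≤ k := by omega
        simp only [G, Tk, Us, if_neg h, if_neg h2]
        have e1 : k + 1 - Q = (k - Q) + 1 := by omega
        rw [e1]
  have hTkmem : ∀ k, Tk k ∈ Tstar A B C D := by
    intro k
    by_cases h : k < Q
    · simp only [Tk, if_pos h]
      exact Tstar_zero A B C D
    · simp only [Tk, if_neg h]
      exact htc _
  have hTkQ : ∀ k, Tk k ∈ Tℓ A B C D Q := fun k => hQ ▸ hTkmem k
  have gen0 : ∀ k, ∃ f : ℕ → (Fin n → ℝ), f 0 = 0 ∧ f Q = Tk k ∧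
      ∀ j < Q, f (j + 1) ∈ Fmap A B C D ({0} : Set (Fin s → ℝ)) (f j) :=
    fun k => traj_of_mem_SIter _ Q 0 (Tk k) (hTkQ k)
  choose τh hτ0 hτQ hτstep using gen0
  have gen1 : ∀ k j, j < Q → ∃ u, C.mulVec (τh k j) + D.mulVec u = 0 ∧
      τh k (j + 1) = A.mulVec (τh k j) + B.mulVec u := by
    intro k j hj
    obtain ⟨u, hu1, hu2⟩ := hτstep k j hj
    exact ⟨u, by simpa using hu1, hu2⟩
  choose wh hw1 hw2 using gen1
  let w' : ℕ → ℕ → (Fin m → ℝ) := fun k j => if h : j < Q then wh k j h else 0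
  let τ : ℕ → ℕ → (Fin n → ℝ) := fun i j => if i < Q then 0 else τh i (j - (i - Q))
  let wg : ℕ → ℕ → (Fin m → ℝ) :=
    fun i j => if i < Q then 0 else if j < i - Q then 0 else w' i (j - (i - Q))
  have hP1 : ∀ i j, j < i → C.mulVec (τ i j) + D.mulVec (wg i j) = 0 := by
    intro i j hj
    by_cases hi : i < Q
    · simp [τ, wg, hi, Matrix.mulVec_zero]
    · simp only [τ, wg, if_neg hi]
      by_cases h2 : j < i - Q
      · have e0 : j - (i - Q) = 0 := by omega
        rw [if_pos h2, e0, hτ0]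
        simp [Matrix.mulVec_zero]
      · have hr : j - (i - Q) < Q := by omega
        rw [if_neg h2, show w' i (j - (i - Q)) = wh i (j - (i - Q)) hr by simp [w', hr]]
        exact hw1 i (j - (i - Q)) hr
  have hP2 : ∀ i j, j < i → τ i (j + 1) = A.mulVec (τ i j) + B.mulVec (wg i j) := by
    intro i j hj
    by_cases hi : i < Q
    · simp [τ, wg, hi, Matrix.mulVec_zero]
    · simp only [τ, wg, if_neg hi]
      by_cases h2 : j < i - Q
      · have e1 : (j + 1) - (i - Q) = 0 := by omega
        have e2 : j - (i - Q) = 0 := by omega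
        rw [if_pos h2, e1, e2, hτ0]
        simp [Matrix.mulVec_zero]
      · have hr : j - (i - Q) < Q := by omega
        have e1 : (j + 1) - (i - Q) = (j - (i - Q)) + 1 := by omega
        rw [if_neg h2, e1, show w' i (j - (i - Q)) = wh i (j - (i - Q)) hr by simp [w', hr]]
        exact hw2 i (j - (i - Q)) hr
  have hP3 : ∀ i, τ i i = Tk i := by
    intro i
    by_cases hi : i < Q
    · simp only [τ, Tk, if_pos hi]
    · have e0 : i - (i - Q) = Q := by omega
      simp only [τ, if_neg hi, e0, hτQ]
  have hP4 : ∀ i, τ i 0 = 0 := by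
    intro i
    by_cases hi : i < Q
    · simp [τ, hi]
    · simp only [τ, if_neg hi]
      have e0 : 0 - (i - Q) = 0 := by omega
      rw [e0, hτ0]
  have hP5 : ∀ i j, j + Q ≤ i → τ i j = 0 := by
    intro i j hij
    have hi : ¬ i < Q := by omega
    simp only [τ, if_neg hi]
    have e0 : j - (i - Q) = 0 := by omega
    rw [e0, hτ0]
  let f : ℕ → (Fin n → ℝ) :=
    fun k => G k + Tk k + ∑ i ∈ Finset.Ico (k + 1) (k + Q + 1), τ i k
  let Ua : ℕ → (Fin m → ℝ) :=
    fun k => Us k + ∑ i ∈ Finset.Ico (k + 1) (k + Q + 1), wg i k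
  have hf0 : f 0 = z + t0 := by
    simp only [f]
    have h1 : G 0 = g0 0 := by simp only [G, if_pos (show 0 < Q by omega)]
    have h2 : Tk 0 = 0 := by simp only [Tk, if_pos (show 0 < Q by omega)]
    have h3 : ∑ i ∈ Finset.Ico (0 + 1) (0 + Q + 1), τ i 0 = 0 :=
      Finset.sum_eq_zero (fun i _ => hP4 i)
    rw [h1, h2, h3, add_zero, add_zero, hg00]
  have hout : ∀ k, C.mulVec (f k) + D.mulVec (Ua k) ∈ Y := by
    intro k
    have key : C.mulVec (f k) + D.mulVec (Ua k)
        = (C.mulVec (G k + Tk k) + D.mulVec (Us k)) +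
          ∑ i ∈ Finset.Ico (k + 1) (k + Q + 1), (C.mulVec (τ i k) + D.mulVec (wg i k)) := by
      simp only [f, Ua, ← Matrix.mulVecLin_apply, map_add, map_sum, Finset.sum_add_distrib]
      abel
    rw [key, Finset.sum_eq_zero (fun i hi => hP1 i k (Finset.mem_Ico.mp hi).1), add_zero]
    exact hS1 k
  have hdyn : ∀ k, f (k + 1) = A.mulVec (f k) + B.mulVec (Ua k) := by
    intro k
    have key : A.mulVec (f k) + B.mulVec (Ua k)
        = (A.mulVec (G k + Tk k) + B.mulVec (Us k)) +
          ∑ i ∈ Finset.Ico (k + 1) (k + Q + 1), (A.mulVec (τ i k) + B.mulVec (wg i k)) := by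
      simp only [f, Ua, ← Matrix.mulVecLin_apply, map_add, map_sum, Finset.sum_add_distrib]
      abel
    have key2 : A.mulVec (f k) + B.mulVec (Ua k)
        = G (k + 1) + ∑ i ∈ Finset.Ico (k + 1) (k + Q + 1), τ i (k + 1) := by
      rw [key, ← hS2 k]
      congr 1
      exact Finset.sum_congr rfl (fun i hi => (hP2 i k (Finset.mem_Ico.mp hi).1).symm)
    rw [key2, Finset.sum_eq_sum_Ico_succ_bot (by omega : k + 1 < k + Q + 1)
      (fun i => τ i (k + 1)), hP3 (k + 1)]
    show G (k + 1) + Tk (k + 1) + ∑ i ∈ Finset.Ico (k + 1 + 1) (k + 1 + Q + 1), τ i (k + 1) = _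
    rw [show k + 1 + Q + 1 = (k + Q + 1) + 1 by omega,
      Finset.sum_Ico_succ_top (by omega : k + 1 + 1 ≤ k + Q + 1) (fun i => τ i (k + 1)),
      hP5 (k + Q + 1) (k + 1) (by omega), add_zero]
    abel
  exact ⟨t0, ht0, f, hf0, fun k => ⟨Ua k, hout k, hdyn k⟩⟩

end Main

/-- If `𝒦(Σ) + 𝒴 = ℝ^s`, then `conv[X(F) ∪ 𝒯*(Σ)] = ℝ^n`. -/
theorem stmt13 {n m s : ℕ} (A : Matrix (Fin n) (Fin n) ℝ) (B : Matrix (Fin n) (Fin m) ℝ)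
    (C : Matrix (Fin s) (Fin n) ℝ) (D : Matrix (Fin s) (Fin m) ℝ)
    (Y : Set (Fin s → ℝ)) (hY : Convex ℝ Y) (h0Y : (0 : Fin s → ℝ) ∈ Y)
    (hsolid : (interior (Y ∩ CDrange C D)).Nonempty)
    (hK : Kset A B C D + Y = Set.univ) :
    convexHull ℝ (XSet (Fmap A B C D Y) ∪ Tstar A B C D) = Set.univ := by
  rw [Set.eq_univ_iff_forall]
  intro x
  obtain ⟨t, ht, hmem⟩ := main_exists A B C D Y hK (x + x)
  have hconv := convex_convexHull ℝ (XSet (Fmap A B C D Y) ∪ Tstar A B C D)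
  have hp : (x + x) + t ∈ convexHull ℝ (XSet (Fmap A B C D Y) ∪ Tstar A B C D) :=
    subset_convexHull ℝ _ (Or.inl hmem)
  have hq : -t ∈ convexHull ℝ (XSet (Fmap A B C D Y) ∪ Tstar A B C D) :=
    subset_convexHull ℝ _ (Or.inr (Tstar_neg A B C D ht))
  have hx := hconv hp hq (by norm_num : (0:ℝ) ≤ 1/2) (by norm_num : (0:ℝ) ≤ 1/2)
    (by norm_num : (1/2 : ℝ) + 1/2 = 1)
  have : (1/2 : ℝ) • ((x + x) + t) + (1/2 : ℝ) • (-t) = x := by module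
  rwa [this] at hx
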